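/- arXiv:1610.08393 — 3 statements merged into one kernel-verified Lean document; each statement's English description precedes it below -/
import Mathlib

section
/- Let p be a prime, ζ a primitive p-th root of unity, and α = C₀ + C₁ζ + ⋯ + C_{p−1}ζ^{p−1} with all Cᵢ ∈ ℤ. If α/p is an algebraic integer (equivalently, α lies in p·ℤ[ζ]), then Cᵢ ≡ Cⱼ (mod p) for all i, j. -/
/-!
Reduce `α / p ∈ ℤ[ζ]` modulo the minimal polynomial `Φ_p = 1 + X + ⋯ + X^{p-1}` of `ζ`: this gives
`r ∈ ℤ[X]` of degree `< p - 1` with `r(ζ) = α / p`. Then `f = ∑ Cᵢ Xⁱ - p r` has degree `≤ p - 1`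
and vanishes at `ζ`, so by Gauss's lemma it is an integer multiple `c Φ_p`. Comparing coefficients,
`Cᵢ - p rᵢ = c` for every `i`.
-/

open Polynomial

namespace minpoly

variable {R S : Type*} [CommRing R] [IsDomain R] [IsIntegrallyClosed R] [CommRing S] [IsDomain S]
  [Algebra R S] [Module.IsTorsionFree R S]

theorem eq_C_mul_of_aeval_eq_zero_of_natDegree_le {x : S} (hx : IsIntegral R x) {f : R[X]}
    (hf : Polynomial.aeval x f = 0) (hdeg : f.natDegree ≤ (minpoly R x).natDegree) :
    f = C (f.coeff (minpoly R x).natDegree) * minpoly R x := by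
  obtain ⟨g, rfl⟩ := isIntegrallyClosed_dvd hx hf
  rcases eq_or_ne g 0 with rfl | hg
  · simp
  have hg0 : g.natDegree = 0 := by
    rw [natDegree_mul (monic hx).ne_zero hg] at hdeg
    omega
  rw [eq_C_of_natDegree_eq_zero hg0, coeff_mul_C, (monic hx).coeff_natDegree, one_mul, mul_comm]

end minpoly

theorem Algebra.exists_natDegree_lt_aeval_eq_of_mem_adjoin_singleton {R S : Type*} [CommRing R]
    [Ring S] [Algebra R S] [Nontrivial S] {x y : S} (hx : IsIntegral R x)
    (hy : y ∈ Algebra.adjoin R {x}) :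
    ∃ r : R[X], r.natDegree < (minpoly R x).natDegree ∧ aeval x r = y := by
  obtain ⟨q, rfl⟩ := Algebra.adjoin_singleton_eq_range_aeval R x ▸ hy
  exact ⟨q %ₘ minpoly R x, natDegree_modByMonic_lt _ (minpoly.monic hx) (minpoly.ne_one R x),
    aeval_modByMonic_eq_self_of_root (minpoly.aeval R x)⟩

namespace Polynomial

variable {R : Type*}

theorem coeff_sum_monomial_fin [Semiring R] {n : ℕ} (c : Fin n → R) (i : Fin n) :
    (∑ j : Fin n, monomial (j : ℕ) (c j)).coeff i = c i := by
  simp [coeff_monomial, Fin.val_inj]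

theorem natDegree_sum_monomial_fin_le [Semiring R] {n : ℕ} (c : Fin n → R) :
    (∑ j : Fin n, monomial (j : ℕ) (c j)).natDegree ≤ n - 1 :=
  natDegree_sum_le_of_forall_le _ _ fun j _ => (natDegree_monomial_le _).trans (by omega)

theorem coeff_cyclotomic_prime_of_lt [Ring R] {p : ℕ} [Fact p.Prime] {i : ℕ} (hi : i < p) :
    (cyclotomic p R).coeff i = 1 := by
  simp [cyclotomic_prime, coeff_X_pow, hi]

end Polynomial

/-- If `α = C₀ + C₁ζ + ⋯ + C_{p−1}ζ^{p−1}` with integer coefficients and `α/p`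
lies in `ℤ[ζ]`, then all the `Cᵢ` are congruent mod `p`. -/
theorem coeffs_congruent_of_div_p_integral (p : ℕ) [hp : Fact p.Prime] (ζ : ℂ)
    (hζ : IsPrimitiveRoot ζ p) (C : Fin p → ℤ)
    (h : (∑ i : Fin p, (C i : ℂ) * ζ ^ (i : ℕ)) / (p : ℂ) ∈ Algebra.adjoin ℤ ({ζ} : Set ℂ)) :
    ∀ i j, C i ≡ C j [ZMOD (p : ℤ)] := by
  have hint : IsIntegral ℤ ζ := hζ.isIntegral hp.out.pos
  have hmin : minpoly ℤ ζ = cyclotomic p ℤ := (cyclotomic_eq_minpoly hζ hp.out.pos).symm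
  have hdeg : (minpoly ℤ ζ).natDegree = p - 1 := by
    rw [hmin, natDegree_cyclotomic, Nat.totient_prime hp.out]
  obtain ⟨r, hr_deg, hr⟩ := Algebra.exists_natDegree_lt_aeval_eq_of_mem_adjoin_singleton hint h
  set f : ℤ[X] := ∑ i : Fin p, monomial (i : ℕ) (C i) - Polynomial.C (p : ℤ) * r
  have hf_root : aeval ζ f = 0 := by
    have hp0 : (p : ℂ) ≠ 0 := Nat.cast_ne_zero.2 hp.out.ne_zero
    simp [f, hr, mul_div_cancel₀ _ hp0, aeval_monomial]
  have hf_deg : f.natDegree ≤ (minpoly ℤ ζ).natDegree := by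
    rw [hdeg]
    refine (natDegree_sub_le _ _).trans (max_le (natDegree_sum_monomial_fin_le C) ?_)
    exact natDegree_C_mul_le _ _ |>.trans (by omega)
  obtain ⟨c, hf⟩ : ∃ c, f = Polynomial.C c * cyclotomic p ℤ :=
    hmin ▸ ⟨_, minpoly.eq_C_mul_of_aeval_eq_zero_of_natDegree_le hint hf_root hf_deg⟩
  suffices key : ∀ i, C i ≡ c [ZMOD p] from fun i j => (key i).trans (key j).symm
  intro i
  have hi : f.coeff i = c := by
    rw [hf, coeff_C_mul, coeff_cyclotomic_prime_of_lt i.isLt, mul_one]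
  simp only [f, coeff_sub, coeff_sum_monomial_fin, coeff_C_mul] at hi
  exact Int.modEq_iff_add_fac.2 ⟨-r.coeff i, by linarith⟩
end

section
/- Let p be prime, ζ a primitive p-th root of unity, and C₀,…,C_{p−1} integers with 0 ≤ Cᵢ ≤ p for all i, C₀ ≥ 2, and ΣCᵢ = p. If C₀ + C₁ζ + ⋯ + C_{p−1}ζ^{p−1} lies in p·ℤ[ζ], then C₀ = p and Cᵢ = 0 for all i ≠ 0. -/
/-!
Since `ζ ^ p = 1`, the quotient `(∑ Cᵢ ζⁱ) / p` can be written as `∑ rᵢ ζⁱ` with `i < p`, so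
`∑ (Cᵢ - p rᵢ) ζⁱ = 0`. By irreducibility of the `p`-th cyclotomic polynomial the only linear
relation among `1, ζ, …, ζ^(p-1)` is `1 + ζ + ⋯ + ζ^(p-1) = 0`, hence all `Cᵢ` are congruent
mod `p`. If `C₀ < p`, the bounds `0 ≤ Cᵢ ≤ p` and `2 ≤ C₀` then force `Cᵢ = C₀` for all `i`,
so `∑ Cᵢ = p C₀ > p`.
-/

open Finset

theorem Algebra.exists_sum_pow_eq_of_mem_adjoin_of_pow_eq_one {R A : Type*} [CommSemiring R]
    [Semiring A] [Algebra R A] {x y : A} {n : ℕ} (hn : 0 < n) (hx : x ^ n = 1)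
    (hy : y ∈ Algebra.adjoin R {x}) : ∃ c : Fin n → R, ∑ i, c i • x ^ (i : ℕ) = y := by
  rw [← Subalgebra.mem_toSubmodule, Algebra.adjoin_eq_span, ← Submonoid.powers_eq_closure] at hy
  rw [← Submodule.mem_span_range_iff_exists_fun]
  refine Submodule.span_le.mpr ?_ hy
  rintro _ ⟨k, rfl⟩
  exact Submodule.subset_span ⟨⟨k % n, Nat.mod_lt k hn⟩, (pow_eq_pow_mod k hx).symm⟩

namespace IsPrimitiveRoot

variable {K : Type*} [Field K] [CharZero K] {p : ℕ} {ζ : K}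

theorem intModEq_of_sum_div_mem_adjoin (hp : p.Prime) (hζ : IsPrimitiveRoot ζ p)
    (C : Fin p → ℤ) (hdvd : (∑ i, (C i : K) * ζ ^ (i : ℕ)) / p ∈ Algebra.adjoin ℤ {ζ})
    (i j : Fin p) : C i ≡ C j [ZMOD p] := by
  obtain ⟨r, hr⟩ := Algebra.exists_sum_pow_eq_of_mem_adjoin_of_pow_eq_one hp.pos hζ.pow_eq_one hdvd
  have hzero : ∑ k, ((C k - p * r k : ℤ) : K) * ζ ^ (k : ℕ) = 0 := by
    have hp0 : (p : K) ≠ 0 := Nat.cast_ne_zero.mpr hp.ne_zero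
    rw [eq_div_iff hp0] at hr
    simp only [zsmul_eq_mul] at hr
    push_cast
    simp only [sub_mul, sum_sub_distrib, ← hr, sum_mul]
    exact sub_eq_zero.mpr (sum_congr rfl fun k _ => by ring)
  have hij := (sum_eq_zero_iff_forall_eq_int hp hζ _).mp hzero i j
  exact Int.modEq_iff_dvd.mpr ⟨r j - r i, by linear_combination -hij⟩

end IsPrimitiveRoot

theorem eq_card_of_modEq_of_sum_eq_card {ι : Type*} [Fintype ι] {n : ℕ}
    (hcard : Fintype.card ι = n) (C : ι → ℤ) (i₀ : ι) (h0 : ∀ i, 0 ≤ C i) (h1 : ∀ i, C i ≤ n)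
    (h2 : 2 ≤ C i₀) (hsum : ∑ i, C i = n) (hmod : ∀ i, C i ≡ C i₀ [ZMOD n]) : C i₀ = n := by
  by_contra hne
  have hlt : C i₀ < n := lt_of_le_of_ne (h1 i₀) hne
  have hconst : ∀ i, C i = C i₀ := fun i => by
    have hdiff : |C i₀ - C i| < (n : ℤ) := abs_lt.mpr ⟨by linarith [h1 i], by linarith [h0 i]⟩
    linarith [Int.eq_zero_of_abs_lt_dvd (Int.ModEq.dvd (hmod i)) hdiff]
  have hn : (0 : ℤ) < n := by linarith
  have hsum_const : ∑ i, C i = n * C i₀ := by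
    rw [sum_congr rfl fun i _ => hconst i, sum_const, card_univ, hcard, nsmul_eq_mul]
  nlinarith

theorem eq_zero_of_sum_eq_apply_of_nonneg {ι : Type*} [Fintype ι] [DecidableEq ι] (C : ι → ℤ)
    (i₀ : ι) (h0 : ∀ i, 0 ≤ C i) (hsum : ∑ i, C i = C i₀) (i : ι) (hi : i ≠ i₀) : C i = 0 := by
  have hrest : ∑ j ∈ univ.erase i₀, C j = 0 := by
    linarith [add_sum_erase univ C (mem_univ i₀)]
  exact (sum_eq_zero_iff_of_nonneg fun j _ => h0 j).mp hrest i (mem_erase.mpr ⟨hi, mem_univ i⟩)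

/-- If `0 ≤ Cᵢ ≤ p`, `C₀ ≥ 2`, `ΣCᵢ = p` and `C₀ + C₁ζ + ⋯ + C_{p−1}ζ^{p−1} ∈ p·ℤ[ζ]`,
then `C₀ = p` and `Cᵢ = 0` for `i ≠ 0`. -/
theorem coeffs_concentrated (p : ℕ) [hp : Fact p.Prime] (ζ : ℂ)
    (hζ : IsPrimitiveRoot ζ p) (C : Fin p → ℤ)
    (h0 : ∀ i, 0 ≤ C i) (h1 : ∀ i, C i ≤ (p : ℤ)) (h2 : 2 ≤ C 0)
    (hsum : ∑ i, C i = (p : ℤ))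
    (hdvd : (∑ i : Fin p, (C i : ℂ) * ζ ^ (i : ℕ)) / (p : ℂ) ∈ Algebra.adjoin ℤ ({ζ} : Set ℂ)) :
    C 0 = (p : ℤ) ∧ ∀ i, i ≠ 0 → C i = 0 := by
  have hmod := hζ.intModEq_of_sum_div_mem_adjoin hp.out C hdvd
  have hC0 := eq_card_of_modEq_of_sum_eq_card (Fintype.card_fin p) C 0 h0 h1 h2 hsum
    fun i => hmod i 0
  exact ⟨hC0, eq_zero_of_sum_eq_apply_of_nonneg C 0 h0 (by rw [hC0]; exact hsum)⟩
end

section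
/- Let G = ℤ/pℤ for p prime with irreducible characters χ_a(b) = ζ^(ab). Suppose I is a bijection of Irr(G) fixing χ_0 and χ_1 such that Σ_{r=0}^{p−1} I(χ_r)(1) χ_r(−1) lies in p·ℤ[ζ] (where 1, −1 ∈ ℤ/pℤ). Then I is the identity on Irr(G). -/
/-!
Writing `c j` for the number of `r` with `f r - r = j`, the sum is `∑ j, c j ζ^j`. Since every
integer relation among `1, ζ, …, ζ^(p-1)` is a multiple of `1 + ζ + ⋯ + ζ^(p-1) = 0` (the
minimal polynomial of `ζ` is `Φ_p`), divisibility by `p` in `ℤ[ζ]` forces all `c j` to be congruent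
mod `p`. They are `p` natural numbers summing to `p` with `c 0 ≥ 2` (from `r = 0, 1`), so
`c 0 = p`: if the common residue were nonzero, every `c j` would be positive and the sum would
exceed `p`.
-/

/-- The character `χ_a(b) = ζ^(ab)` of `ℤ/pℤ`. -/
noncomputable def chi (p : ℕ) (ζ : ℂ) (a b : ZMod p) : ℂ := ζ ^ (a * b).val

open Polynomial Finset

theorem IsPrimitiveRoot.pow_val_add {M : Type*} [CommMonoid M] {ζ : M} {n : ℕ} [NeZero n]
    (hζ : IsPrimitiveRoot ζ n) (a b : ZMod n) :
    ζ ^ (a + b).val = ζ ^ a.val * ζ ^ b.val := by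
  have := pow_mod_orderOf ζ (a.val + b.val)
  rwa [← hζ.eq_orderOf, ← ZMod.val_add, pow_add] at this

theorem exists_natDegree_lt_aeval_eq_of_mem_adjoin {A : Type*} [CommRing A] {ζ x : A} {n : ℕ}
    (hn : n ≠ 0) (hζ : ζ ^ n = 1) (hx : x ∈ Algebra.adjoin ℤ {ζ}) :
    ∃ q : ℤ[X], q.natDegree < n ∧ aeval ζ q = x := by
  rw [Algebra.adjoin_singleton_eq_range_aeval] at hx
  obtain ⟨q, rfl⟩ := hx
  have hmonic : (X ^ n - C 1 : ℤ[X]).Monic := monic_X_pow_sub_C 1 hn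
  refine ⟨q %ₘ (X ^ n - C 1), ?_, aeval_modByMonic_eq_self_of_root (by simp [hζ])⟩
  have hdeg : (X ^ n - C 1 : ℤ[X]).natDegree = n := natDegree_X_pow_sub_C
  have hne : (X ^ n - C 1 : ℤ[X]) ≠ 1 := fun h => hn (by rw [← hdeg, h, natDegree_one])
  exact (natDegree_modByMonic_lt q hmonic hne).trans_eq hdeg

theorem IsPrimitiveRoot.coeff_eq_coeff_zero_of_aeval_eq_zero {K : Type*} [Field K]
    [CharZero K] {ζ : K} {p : ℕ} [Fact p.Prime] (hζ : IsPrimitiveRoot ζ p) {A : ℤ[X]}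
    (hdeg : A.natDegree < p) (hA : aeval ζ A = 0) {k : ℕ} (hk : k < p) :
    A.coeff k = A.coeff 0 := by
  have hp := (Fact.out : p.Prime)
  obtain ⟨R, rfl⟩ : cyclotomic p ℤ ∣ A := by
    rw [cyclotomic_eq_minpoly hζ hp.pos]
    exact minpoly.isIntegrallyClosed_dvd (hζ.isIntegral hp.pos) hA
  obtain rfl | hR := eq_or_ne R 0
  · simp
  have hR0 : R.natDegree = 0 := by
    rw [natDegree_mul (cyclotomic_ne_zero p ℤ) hR, natDegree_cyclotomic,
      Nat.totient_prime hp] at hdeg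
    omega
  rw [eq_C_of_natDegree_eq_zero hR0, coeff_mul_C, coeff_mul_C, cyclotomic_prime,
    finsetSum_coeff, finsetSum_coeff]
  simp [coeff_X_pow, hk, hp.pos]

theorem IsPrimitiveRoot.modEq_of_sum_mul_pow_val_eq_mul_mem_adjoin {K : Type*} [Field K]
    [CharZero K] {ζ : K} {p : ℕ} [Fact p.Prime] (hζ : IsPrimitiveRoot ζ p) (c : ZMod p → ℤ)
    {x : K} (hx : x ∈ Algebra.adjoin ℤ {ζ}) (h : ∑ j, (c j : K) * ζ ^ j.val = p * x)
    (i j : ZMod p) : c i ≡ c j [ZMOD p] := by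
  have hp := (Fact.out : p.Prime)
  obtain ⟨q, hqdeg, rfl⟩ :=
    exists_natDegree_lt_aeval_eq_of_mem_adjoin hp.ne_zero hζ.pow_eq_one hx
  set A : ℤ[X] := ∑ j : ZMod p, C (c j) * X ^ j.val - C (p : ℤ) * q
  have hdeg : A.natDegree < p := by
    refine (natDegree_sub_le _ _).trans_lt (max_lt ?_ ?_)
    · refine (natDegree_sum_le_of_forall_le _ _ (n := p - 1) fun j _ =>
        (natDegree_C_mul_X_pow_le (c j) j.val).trans ?_).trans_lt (by omega)
      have := j.val_lt
      omega
    · exact (natDegree_C_mul_le _ _).trans_lt hqdeg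
  have hA : aeval ζ A = 0 := by simp [A, h]
  have hcoeff (k : ZMod p) : A.coeff k.val = c k - p * q.coeff k.val := by
    simp [A, finsetSum_coeff, coeff_X_pow, (ZMod.val_injective p).eq_iff]
  have hcongr (k : ZMod p) : c k ≡ A.coeff 0 [ZMOD p] := by
    rw [← hζ.coeff_eq_coeff_zero_of_aeval_eq_zero hdeg hA k.val_lt, hcoeff]
    exact Int.modEq_iff_dvd.mpr ⟨-q.coeff k.val, by ring⟩
  exact (hcongr i).trans (hcongr j).symm

theorem eq_card_of_sum_eq_card_of_forall_modEq {ι : Type*} [Fintype ι] (c : ι → ℕ)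
    (hsum : ∑ i, c i = Fintype.card ι) (hmod : ∀ i j, c i ≡ c j [MOD Fintype.card ι])
    {i₀ : ι} (hi₀ : 2 ≤ c i₀) : c i₀ = Fintype.card ι := by
  have hle : c i₀ ≤ Fintype.card ι :=
    hsum ▸ single_le_sum (fun i _ => Nat.zero_le (c i)) (mem_univ i₀)
  by_cases hdvd : Fintype.card ι ∣ c i₀
  · exact hle.antisymm (Nat.le_of_dvd (by omega) hdvd)
  have hpos (i : ι) : 1 ≤ c i := by
    refine Nat.one_le_iff_ne_zero.mpr fun hi => hdvd ?_
    exact Nat.modEq_zero_iff_dvd.mp (hi ▸ hmod i₀ i)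
  have : ∑ _i : ι, 1 < ∑ i, c i :=
    sum_lt_sum (fun i _ => hpos i) ⟨i₀, mem_univ i₀, by omega⟩
  simp [hsum] at this

/-- A permutation of `Irr(ℤ/pℤ)` fixing `χ₀` and `χ₁` such that
`∑_r I(χ_r)(1) χ_r(−1) ∈ p·ℤ[ζ]` is the identity. -/
theorem perm_fixing_two_chars_is_id (p : ℕ) [Fact p.Prime] (ζ : ℂ)
    (hζ : IsPrimitiveRoot ζ p) (f : Equiv.Perm (ZMod p))
    (h0 : f 0 = 0) (h1 : f 1 = 1)
    (h : (∑ r : ZMod p, chi p ζ (f r) 1 * chi p ζ r (-1)) / (p : ℂ)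
        ∈ Algebra.adjoin ℤ ({ζ} : Set ℂ)) :
    ∀ r, f r = r := by
  classical
  set c : ZMod p → ℕ := fun j => #{r | f r - r = j}
  have hsum :
      ∑ r, chi p ζ (f r) 1 * chi p ζ r (-1) = ∑ j, ((c j : ℤ) : ℂ) * ζ ^ j.val := by
    simp only [chi, mul_one, mul_neg_one, ← hζ.pow_val_add, ← sub_eq_add_neg]
    rw [← sum_fiberwise' univ (fun r => f r - r) (fun j => ζ ^ j.val)]
    simp [c]
  have hmod (i j : ZMod p) : c i ≡ c j [MOD p] := by
    refine Int.natCast_modEq_iff.mp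
      (hζ.modEq_of_sum_mul_pow_val_eq_mul_mem_adjoin (fun j => (c j : ℤ)) h ?_ i j)
    rw [← hsum, mul_div_cancel₀ _ (Nat.cast_ne_zero.mpr (Fact.out : p.Prime).ne_zero)]
  have hcard : ∑ j, c j = Fintype.card (ZMod p) :=
    (card_eq_sum_card_fiberwise fun r _ => mem_univ (f r - r)).symm
  have htwo : 2 ≤ c 0 := by
    have : ({0, 1} : Finset (ZMod p)) ⊆ univ.filter (fun r => f r - r = 0) := by
      simp [insert_subset_iff, h0, h1]
    simpa using card_le_card this
  have hc0 := eq_card_of_sum_eq_card_of_forall_modEq c hcard (by simpa using hmod) htwo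
  intro r
  simpa [c, sub_eq_zero] using card_filter_eq_iff.mp hc0 r (mem_univ r)
end
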